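/- Let σ be a permutation of {1,…,n} such that the K-linear map Iuₙ → Iuₙ determined on the basis by x_{ij} ↦ x_{σ(i)σ(j)}, a_i ↦ a_{σ(i)}, b_i ↦ b_{σ(i)} is a Lie algebra automorphism of Iuₙ. Then σ is a power of the cyclic permutation ψ given by ψ(i) = i+1 for i < n and ψ(n) = 1. -/

import Mathlib

/-- Index set for the basis of `Iuₙ`: the off-diagonal pairs indexing the `x_{ij}` (`i ≠ j`),
then the `a_i`'s, then the `b_i`'s. -/
abbrev IuIdx (n : ℕ) : Type := { p : Fin n × Fin n // p.1 ≠ p.2 } ⊕ (Fin n ⊕ Fin n)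

/-- `Iuₙ`: the free `K`-vector space on the basis `{x_{ij} : i ≠ j} ∪ {a_i} ∪ {b_i}`. -/
abbrev Iu (n : ℕ) (K : Type*) [Field K] : Type _ := IuIdx n →₀ K

variable (n : ℕ) (K : Type*) [Field K]

/-- The basis element `x_{ij}` (`i ≠ j`). -/
noncomputable def xE (i j : Fin n) (h : i ≠ j) : Iu n K :=
  Finsupp.single (Sum.inl ⟨(i, j), h⟩) 1

/-- The basis element `a_i`. -/
noncomputable def aE (i : Fin n) : Iu n K := Finsupp.single (Sum.inr (Sum.inl i)) 1

/-- The basis element `b_i`. -/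
noncomputable def bE (i : Fin n) : Iu n K := Finsupp.single (Sum.inr (Sum.inr i)) 1

/-- `x_{ij}` as a total function (junk value `0` when `i = j`). -/
noncomputable def xe (i j : Fin n) : Iu n K := if h : i ≠ j then xE n K i j h else 0

/-- The length `λ(i,j)`: equals `j - i` if `i < j`, and `n - (i - j)` if `i > j`. -/
def lam (n : ℕ) (i j : Fin n) : ℕ := (j - i : Fin n).val

/-- The bracket of `Iuₙ` on basis elements:
`[x_{ij}, x_{kl}] = δ_{jk} x_{il} - δ_{li} x_{kj}` if `λ(i,j) + λ(k,l) < n` and `0` otherwise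
(unless both `j = k` and `l = i`); `[x_{ij}, x_{ji}] = ½(b_i - b_j)`;
`[a_i, x_{jk}] = (δ_{ij} - δ_{ik}) x_{jk}`; `[b_i, x_{jk}] = 0`;
`[a_i, a_j] = [b_i, b_j] = [a_i, b_j] = 0`; extended antisymmetrically. -/
noncomputable def bb : IuIdx n → IuIdx n → Iu n K
  | Sum.inl ⟨(i, j), _⟩, Sum.inl ⟨(k, l), _⟩ =>
      if k = j ∧ l = i then ((2 : K)⁻¹) • (bE n K i - bE n K j)
      else if lam n i j + lam n k l < n then
        (if j = k then xe n K i l else 0) - (if l = i then xe n K k j else 0)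
      else 0
  | Sum.inr (Sum.inl i), Sum.inl ⟨(j, k), _⟩ =>
      (((if i = j then 1 else 0) : K) - ((if i = k then 1 else 0) : K)) • xe n K j k
  | Sum.inl ⟨(j, k), _⟩, Sum.inr (Sum.inl i) =>
      -((((if i = j then 1 else 0) : K) - ((if i = k then 1 else 0) : K)) • xe n K j k)
  | _, _ => 0

/-- The bilinear bracket of `Iuₙ`, extended bilinearly from its values on basis elements. -/
noncomputable def br : Iu n K →ₗ[K] Iu n K →ₗ[K] Iu n K :=
  Finsupp.lift (Iu n K →ₗ[K] Iu n K) K (IuIdx n) fun s =>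
    Finsupp.lift (Iu n K) K (IuIdx n) fun t => bb n K s t

/-- The linear map on `Iuₙ` induced by a permutation `σ` of the indices:
`x_{ij} ↦ x_{σ(i)σ(j)}`, `a_i ↦ a_{σ(i)}`, `b_i ↦ b_{σ(i)}`. -/
noncomputable def permMap (σ : Equiv.Perm (Fin n)) : Iu n K →ₗ[K] Iu n K :=
  Finsupp.lift (Iu n K) K (IuIdx n) fun t =>
    match t with
    | Sum.inl ⟨(i, j), _⟩ => xe n K (σ i) (σ j)
    | Sum.inr (Sum.inl i) => aE n K (σ i)
    | Sum.inr (Sum.inr i) => bE n K (σ i)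

/-!
Call a path `i → j → l` of distinct indices short if `λ(i,j) + λ(j,l) < n`, i.e. it does not wind
around the cycle `ℤ/n`. For a short path `[x_{ij}, x_{jl}] = x_{il} ≠ 0`, while for a long one with
`l ≠ i` the bracket vanishes; so a bracket-preserving `σ` maps short paths to short paths, and along
them `λ` is additive. Stepping by `+1` this gives `λ(σ i, σ (i + k)) ≥ k` for `0 < k < n`. Taking
`k = n - 1` leaves `λ(σ i, σ (i + 1)) = n - λ(σ (i + 1), σ i) ≤ 1`, so `σ (i + 1) = σ i + 1` and `σ`
is a rotation.
-/

section Lam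

open Fin.CommRing

variable {n} [NeZero n]

theorem lam_eq_zero_iff {i j : Fin n} : lam n i j = 0 ↔ i = j := by
  rw [lam, Fin.val_eq_zero_iff, sub_eq_zero, eq_comm]

theorem lam_pos {i j : Fin n} (h : i ≠ j) : 0 < lam n i j :=
  Nat.pos_of_ne_zero (lam_eq_zero_iff.not.mpr h)

theorem add_lam (i j : Fin n) : i + (lam n i j : Fin n) = j := by
  rw [lam, Fin.cast_val_eq_self, add_sub_cancel]

theorem lam_add_natCast (i : Fin n) {k : ℕ} (hk : k < n) : lam n i (i + k) = k := by
  rw [lam, add_sub_cancel_left, Fin.val_natCast, Nat.mod_eq_of_lt hk]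

theorem ne_add_natCast (i : Fin n) {k : ℕ} (hk0 : k ≠ 0) (hk : k < n) : i ≠ i + k := by
  intro h
  exact hk0 (by rw [← lam_add_natCast i hk, ← h, lam_eq_zero_iff])

theorem lam_trans {i j l : Fin n} (h : lam n i j + lam n j l < n) :
    lam n i l = lam n i j + lam n j l := by
  have e : l - i = (j - i) + (l - j) := by ring
  rw [lam, e, Fin.val_add_eq_of_add_lt h]
  rfl

theorem lam_add_lam_swap {i j : Fin n} (h : i ≠ j) : lam n i j + lam n j i = n := by
  rw [lam, lam, ← neg_sub j i, Fin.val_neg, if_neg (sub_ne_zero.mpr h.symm)]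
  have := (j - i).isLt
  omega

def PreservesShortPaths (f : Fin n → Fin n) : Prop :=
  ∀ ⦃i j l : Fin n⦄, i ≠ j → j ≠ l → lam n i j + lam n j l < n →
    lam n (f i) (f j) + lam n (f j) (f l) < n

end Lam

theorem br_xE_xE_of_ne {i j l : Fin n} (hij : i ≠ j) (hjl : j ≠ l) (hil : i ≠ l) :
    br n K (xE n K i j hij) (xE n K j l hjl) =
      if lam n i j + lam n j l < n then xE n K i l hil else 0 := by
  simp only [br, xE, Finsupp.lift_apply, Finsupp.sum_single_index, zero_smul, one_smul, bb]
  simp [hil.symm, xe, hil, xE]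

theorem permMap_xE (σ : Equiv.Perm (Fin n)) {i j : Fin n} (hij : i ≠ j) :
    permMap n K σ (xE n K i j hij) = xE n K (σ i) (σ j) (σ.injective.ne hij) := by
  simp only [permMap, xE, Finsupp.lift_apply, Finsupp.sum_single_index, zero_smul, one_smul]
  rw [xe, dif_pos (σ.injective.ne hij)]
  rfl

theorem preservesShortPaths_of_map_br [NeZero n] (σ : Equiv.Perm (Fin n))
    (hσ : ∀ u v : Iu n K, permMap n K σ (br n K u v) = br n K (permMap n K σ u) (permMap n K σ v)) :
    PreservesShortPaths σ := by
  intro i j l hij hjl h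
  have hil : i ≠ l := by
    rw [Ne, ← lam_eq_zero_iff, lam_trans h]
    have := lam_pos hij
    omega
  by_contra hσ_long
  have := hσ (xE n K i j hij) (xE n K j l hjl)
  rw [br_xE_xE_of_ne n K hij hjl hil, if_pos h, permMap_xE, permMap_xE, permMap_xE,
    br_xE_xE_of_ne n K _ _ (σ.injective.ne hil), if_neg hσ_long] at this
  exact one_ne_zero (Finsupp.single_eq_zero.mp this)

section Rotation

open Fin.CommRing

variable {n} [NeZero n]

theorem eq_addRight_pow_of_map_add_one {σ : Equiv.Perm (Fin n)}
    (h : ∀ i, σ (i + 1) = σ i + 1) : σ = Equiv.addRight (1 : Fin n) ^ (σ 0).val := by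
  have hnat : ∀ k : ℕ, σ (k : Fin n) = k + σ 0 := by
    intro k
    induction k with
    | zero => simp
    | succ k ih => rw [Nat.cast_succ, h, ih, add_right_comm]
  refine Equiv.ext fun i => ?_
  rw [Equiv.nsmul_addRight, Equiv.coe_addRight, nsmul_eq_mul, mul_one, Fin.cast_val_eq_self]
  simpa only [Fin.cast_val_eq_self] using hnat i.val

theorem le_lam_apply_add_natCast {f : Fin n → Fin n} (hf : Function.Injective f)
    (hf_lam : PreservesShortPaths f) (i : Fin n) {k : ℕ} (hk1 : 1 ≤ k) (hkn : k < n) :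
    k ≤ lam n (f i) (f (i + k)) := by
  induction k, hk1 using Nat.le_induction with
  | base => exact lam_pos (hf.ne (ne_add_natCast i one_ne_zero hkn))
  | succ k hk1 ih =>
    have hsucc : i + ↑(k + 1) = (i + k) + ((1 : ℕ) : Fin n) := by
      rw [Nat.cast_one, Nat.cast_succ, add_assoc]
    have hsum : lam n i (i + k) + lam n (i + k) (i + ↑(k + 1)) < n := by
      rw [hsucc, lam_add_natCast i (by omega), lam_add_natCast _ (by omega)]
      omega
    have hne : i + k ≠ i + ↑(k + 1) := by
      rw [hsucc]
      exact ne_add_natCast _ one_ne_zero (by omega)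
    rw [lam_trans (hf_lam (ne_add_natCast i (by omega) (by omega)) hne hsum)]
    have hstep := lam_pos (hf.ne hne)
    have hk := ih (by omega)
    omega

theorem apply_add_one {f : Fin n → Fin n} (hf : Function.Injective f)
    (hf_lam : PreservesShortPaths f) (hn : 2 ≤ n) (i : Fin n) : f (i + 1) = f i + 1 := by
  have hwrap : i + 1 + ↑(n - 1) = i := by
    rw [Nat.cast_sub (by omega), Fin.natCast_self]
    ring
  have hback := le_lam_apply_add_natCast hf hf_lam (i + 1) (k := n - 1) (by omega) (by omega)
  rw [hwrap] at hback
  have hne : f i ≠ f (i + 1) := hf.ne (by simpa using ne_add_natCast i one_ne_zero (by omega))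
  have hcyc := lam_add_lam_swap hne
  have hpos := lam_pos hne
  have hone : lam n (f i) (f (i + 1)) = 1 := by omega
  rw [← add_lam (f i) (f (i + 1)), hone, Nat.cast_one]

end Rotation

theorem stmt18_general (n : ℕ) [NeZero n] (hn : 2 ≤ n) (K : Type*) [Field K]
    (σ : Equiv.Perm (Fin n))
    (hhom : ∀ u v : Iu n K,
      permMap n K σ (br n K u v) = br n K (permMap n K σ u) (permMap n K σ v)) :
    ∃ k : ℕ, σ = (Equiv.addRight (1 : Fin n)) ^ k :=
  ⟨_, eq_addRight_pow_of_map_add_one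
    (apply_add_one σ.injective (preservesShortPaths_of_map_br n K σ hhom) hn)⟩

/-- if the map induced by a permutation `σ` is a Lie algebra automorphism of
`Iuₙ` then `σ` is a power of the cyclic permutation `ψ : i ↦ i + 1` (mod `n`). -/
theorem stmt18 (n : ℕ) [NeZero n] (hn : 2 ≤ n) (K : Type*) [Field K] (hK : (2 : K) ≠ 0)
    (σ : Equiv.Perm (Fin n))
    (hbij : Function.Bijective (permMap n K σ))
    (hhom : ∀ u v : Iu n K,
      permMap n K σ (br n K u v) = br n K (permMap n K σ u) (permMap n K σ v)) :
    ∃ k : ℕ, σ = (Equiv.addRight (1 : Fin n)) ^ k :=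
  stmt18_general n hn K σ hhom
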